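/- arXiv:1306.2748 — 2 statements merged into one kernel-verified Lean document; each statement's English description precedes it below -/
import Mathlib

section
/- For an odd integer N and odd prime p, the local factor at 2 of the singular series vanishes beyond the first term: taking d = 1, with 2 ∤ N one has A_{2^s}(N,1,b⃗) = 0 for all s ≥ 1 and all b⃗ ∈ ℤ⁴. -/
/-- `e t = exp(2πit)`. -/
noncomputable def e (t : ℂ) : ℂ := Complex.exp (2 * Real.pi * Complex.I * t)

/-- The Gauss sum `G(q,m,n) = ∑_{x mod q} e((mx²+nx)/q)`. -/
noncomputable def G (q : ℕ) (m n : ℤ) : ℂ :=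
  ∑ x ∈ Finset.range q, e (((m * (x : ℤ) ^ 2 + n * (x : ℤ) : ℤ) : ℂ) / (q : ℂ))

lemma e_add (s t : ℂ) : e (s + t) = e s * e t := by
  unfold e; rw [mul_add, Complex.exp_add]

lemma e_zero : e 0 = 1 := by unfold e; simp

lemma e_int (n : ℤ) : e n = 1 := by
  unfold e
  rw [show 2 * (Real.pi : ℂ) * Complex.I * n = n * (2 * Real.pi * Complex.I) by ring]
  exact Complex.exp_int_mul_two_pi_mul_I n

lemma e_half : e (1/2 : ℂ) = -1 := by
  unfold e
  rw [show 2 * (Real.pi : ℂ) * Complex.I * (1/2) = Real.pi * Complex.I by ring]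
  exact Complex.exp_pi_mul_I

/-- Periodicity workhorse: if numerators differ by a multiple of `q`, the `e`-values agree. -/
lemma eA {q : ℕ} (hq : q ≠ 0) (A B n : ℤ) (h : B = A + n * q) :
    e ((B : ℂ) / (q : ℂ)) = e ((A : ℂ) / (q : ℂ)) := by
  have hq' : (q : ℂ) ≠ 0 := Nat.cast_ne_zero.mpr hq
  have harg : (B : ℂ) / (q : ℂ) = (A : ℂ) / (q : ℂ) + ((n : ℤ) : ℂ) := by
    field_simp
    push_cast [h]
    ring
  rw [harg, e_add, e_int, mul_one]

/-- Half-shift workhorse: if `2B = 2A + nq` with `n` odd, then `e(B/q) = -e(A/q)`. -/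
lemma eB {q : ℕ} (hq : q ≠ 0) (A B n : ℤ) (hn : Odd n) (h : 2 * B = 2 * A + n * q) :
    e ((B : ℂ) / (q : ℂ)) = - e ((A : ℂ) / (q : ℂ)) := by
  obtain ⟨k, rfl⟩ := hn
  have hq' : (q : ℂ) ≠ 0 := Nat.cast_ne_zero.mpr hq
  have harg : (B : ℂ) / (q : ℂ) = ((A : ℂ) / (q : ℂ) + ((k : ℤ) : ℂ)) + 1/2 := by
    have h' : ((2*B : ℤ) : ℂ) = ((2*A + (2*k+1)*q : ℤ) : ℂ) := by exact_mod_cast h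
    push_cast at h'
    field_simp
    linear_combination h'
  rw [harg, e_add, e_add, e_int, mul_one, e_half, mul_neg_one]

lemma eC (q : ℕ) (X Y : ℤ) :
    e ((X : ℂ) / (q : ℂ)) * e ((Y : ℂ) / (q : ℂ)) = e (((X + Y : ℤ) : ℂ) / (q : ℂ)) := by
  rw [← e_add]; congr 1; push_cast; ring

open Finset in
lemma sum_shift_one (q : ℕ) (f : ℤ → ℂ) (hf : ∀ x : ℤ, f (x + q) = f x) :
    ∑ x ∈ Finset.range q, f ((x : ℤ) + 1) = ∑ x ∈ Finset.range q, f (x : ℤ) := by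
  have h1 : ∑ i ∈ Finset.range (q+1), f (i : ℤ) =
      (∑ i ∈ Finset.range q, f ((i+1 : ℕ) : ℤ)) + f ((0 : ℕ) : ℤ) :=
    Finset.sum_range_succ' (fun n : ℕ => f (n : ℤ)) q
  have h2 : ∑ i ∈ Finset.range (q+1), f (i : ℤ) =
      (∑ i ∈ Finset.range q, f (i : ℤ)) + f ((q : ℕ) : ℤ) :=
    Finset.sum_range_succ (fun n : ℕ => f (n : ℤ)) q
  have h3 : f ((q : ℕ) : ℤ) = f ((0 : ℕ) : ℤ) := by
    have := hf 0
    simpa using this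
  have h4 : ∀ i : ℕ, f ((i+1 : ℕ) : ℤ) = f ((i : ℤ) + 1) := by
    intro i; norm_cast
  calc ∑ x ∈ Finset.range q, f ((x : ℤ) + 1)
      = ∑ i ∈ Finset.range q, f ((i+1 : ℕ) : ℤ) := by
        exact Finset.sum_congr rfl fun i _ => (h4 i).symm
    _ = ∑ i ∈ Finset.range q, f (i : ℤ) := by
        have := h1.symm.trans h2
        rw [h3] at this
        exact add_right_cancel this

lemma sum_shift (q : ℕ) (f : ℤ → ℂ) (hf : ∀ x : ℤ, f (x + q) = f x) (c : ℤ) :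
    ∑ x ∈ Finset.range q, f ((x : ℤ) + c) = ∑ x ∈ Finset.range q, f (x : ℤ) := by
  induction c using Int.induction_on with
  | zero => simp
  | succ k ih =>
    have hper : ∀ x : ℤ, (fun y => f (y + k)) (x + q) = (fun y => f (y + k)) x := by
      intro x; simp only
      rw [show x + (q : ℤ) + k = (x + k) + q by ring, hf]
    have h1 := sum_shift_one q (fun y => f (y + k)) hper
    try simp only at h1
    calc ∑ x ∈ Finset.range q, f ((x : ℤ) + (k + 1))
        = ∑ x ∈ Finset.range q, f (((x : ℤ) + 1) + k) := by
          exact Finset.sum_congr rfl fun i _ => by rw [show (i:ℤ) + (k+1) = ((i:ℤ)+1)+k by ring]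
      _ = ∑ x ∈ Finset.range q, f ((x : ℤ) + k) := h1
      _ = ∑ x ∈ Finset.range q, f (x : ℤ) := ih
  | pred k ih =>
    have hper : ∀ x : ℤ, (fun y => f (y + (-k - 1))) (x + q) = (fun y => f (y + (-k - 1))) x := by
      intro x; simp only
      rw [show x + (q : ℤ) + (-k - 1) = (x + (-k - 1)) + q by ring, hf]
    have h1 := sum_shift_one q (fun y => f (y + (-k - 1))) hper
    try simp only at h1
    calc ∑ x ∈ Finset.range q, f ((x : ℤ) + (-k - 1))
        = ∑ x ∈ Finset.range q, f (((x : ℤ) + 1) + (-k - 1)) := h1.symm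
      _ = ∑ x ∈ Finset.range q, f ((x : ℤ) + (-k)) := by
          exact Finset.sum_congr rfl fun i _ => by rw [show ((i:ℤ)+1) + (-k-1) = (i:ℤ) + (-k) by ring]
      _ = ∑ x ∈ Finset.range q, f (x : ℤ) := ih

lemma sum_antiperiodic_eq_zero (q : ℕ) (f : ℤ → ℂ) (hper : ∀ x : ℤ, f (x + q) = f x)
    (c : ℤ) (hc : ∀ x : ℤ, f (x + c) = - f x) :
    ∑ x ∈ Finset.range q, f (x : ℤ) = 0 := by
  have h := sum_shift q f hper c
  have h2 : ∑ x ∈ Finset.range q, f ((x : ℤ) + c) = - ∑ x ∈ Finset.range q, f (x : ℤ) := by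
    rw [← Finset.sum_neg_distrib]
    exact Finset.sum_congr rfl fun x _ => hc x
  have h3 : ∑ x ∈ Finset.range q, f (x : ℤ) = - ∑ x ∈ Finset.range q, f (x : ℤ) := h.symm.trans h2
  have h4 : (2 : ℂ) * ∑ x ∈ Finset.range q, f (x : ℤ) = 0 := by linear_combination h3
  simpa using h4

lemma sum_even_odd (n : ℕ) (f : ℕ → ℂ) :
    ∑ x ∈ Finset.range (2*n), f x
      = (∑ t ∈ Finset.range n, f (2*t)) + ∑ t ∈ Finset.range n, f (2*t+1) := by
  induction n with
  | zero => simp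
  | succ m ih =>
    rw [show 2*(m+1) = (2*m+1)+1 by ring, Finset.sum_range_succ, Finset.sum_range_succ,
      Finset.sum_range_succ (fun t => f (2*t)), Finset.sum_range_succ (fun t => f (2*t+1)), ih]
    ring

lemma sum_odd (q n : ℕ) (h : q = 2*n) (f : ℕ → ℂ) :
    ∑ x ∈ (Finset.range q).filter (fun x => Odd x), f x
      = ∑ t ∈ Finset.range n, f (2*t+1) := by
  subst h
  refine Finset.sum_nbij' (fun x => x / 2) (fun t => 2*t+1) ?_ ?_ ?_ ?_ ?_
  · intro a ha
    simp only [Finset.mem_filter, Finset.mem_range] at ha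
    obtain ⟨h1, k, hk⟩ := ha
    simp only [Finset.mem_range]
    omega
  · intro t ht
    simp only [Finset.mem_range] at ht
    simp only [Finset.mem_filter, Finset.mem_range]
    exact ⟨by omega, t, by omega⟩
  · intro a ha
    simp only [Finset.mem_filter, Finset.mem_range] at ha
    obtain ⟨h1, k, hk⟩ := ha
    show 2 * (a / 2) + 1 = a
    omega
  · intro t ht
    show (2*t+1) / 2 = t
    omega
  · intro a ha
    simp only [Finset.mem_filter, Finset.mem_range] at ha
    obtain ⟨h1, k, hk⟩ := ha
    show f a = f (2 * (a/2) + 1)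
    congr 1
    omega

lemma G_period (q : ℕ) (hq : q ≠ 0) (m n : ℤ) : G q (m + q) n = G q m n := by
  unfold G
  refine Finset.sum_congr rfl fun x _ => ?_
  exact eA hq (m * (x:ℤ)^2 + n * x) ((m + q) * (x:ℤ)^2 + n * x) ((x:ℤ)^2) (by push_cast; ring)

lemma G_shift (q : ℕ) (hq : q ≠ 0) (a c : ℤ) :
    G q a (2*a*c) = e (((-(a*c^2) : ℤ) : ℂ) / (q : ℂ)) * G q a 0 := by
  unfold G
  have step1 : ∀ x : ℕ, e (((a * (x:ℤ)^2 + 2*a*c * (x:ℤ) : ℤ) : ℂ) / (q : ℂ))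
      = e (((-(a*c^2) : ℤ) : ℂ) / (q : ℂ)) *
        e (((a * ((x:ℤ) + c)^2 : ℤ) : ℂ) / (q : ℂ)) := by
    intro x
    rw [eC]
    congr 1
    push_cast
    ring
  rw [Finset.sum_congr rfl fun x _ => step1 x, ← Finset.mul_sum]
  have hper : ∀ y : ℤ, (fun y : ℤ => e (((a * y^2 : ℤ) : ℂ) / (q : ℂ))) (y + q)
      = (fun y : ℤ => e (((a * y^2 : ℤ) : ℂ) / (q : ℂ))) y := by
    intro y
    exact eA hq (a * y^2) (a * (y + q)^2) (a * (2*y + q)) (by push_cast; ring)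
  have := sum_shift q (fun y : ℤ => e (((a * y^2 : ℤ) : ℂ) / (q : ℂ))) hper c
  try simp only at this
  rw [this]
  refine congrArg _ (Finset.sum_congr rfl fun x _ => ?_)
  congr 2
  push_cast
  ring

lemma key (q : ℕ) (hq : q ≠ 0) (a N : ℤ) (b : Fin 4 → ℤ) :
    e (((a * ((b 0 ^ 2 + b 1 ^ 2 + b 2 ^ 2 + b 3 ^ 2) - N) : ℤ) : ℂ) / (q : ℂ)) *
      ∏ j : Fin 4, G q a (2 * a * b j)
    = e (((-(a*N) : ℤ) : ℂ) / (q : ℂ)) * (G q a 0)^4 := by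
  rw [Fin.prod_univ_four, G_shift q hq a (b 0), G_shift q hq a (b 1), G_shift q hq a (b 2),
    G_shift q hq a (b 3)]
  have hre : e (((a * ((b 0 ^ 2 + b 1 ^ 2 + b 2 ^ 2 + b 3 ^ 2) - N) : ℤ) : ℂ) / (q : ℂ)) *
      (e (((-(a * b 0 ^2) : ℤ) : ℂ) / (q : ℂ)) * G q a 0 *
        (e (((-(a * b 1 ^2) : ℤ) : ℂ) / (q : ℂ)) * G q a 0) *
        (e (((-(a * b 2 ^2) : ℤ) : ℂ) / (q : ℂ)) * G q a 0) *
        (e (((-(a * b 3 ^2) : ℤ) : ℂ) / (q : ℂ)) * G q a 0))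
      = e (((a * ((b 0 ^ 2 + b 1 ^ 2 + b 2 ^ 2 + b 3 ^ 2) - N) : ℤ) : ℂ) / (q : ℂ)) *
        e (((-(a * b 0 ^2) : ℤ) : ℂ) / (q : ℂ)) * e (((-(a * b 1 ^2) : ℤ) : ℂ) / (q : ℂ)) *
        e (((-(a * b 2 ^2) : ℤ) : ℂ) / (q : ℂ)) * e (((-(a * b 3 ^2) : ℤ) : ℂ) / (q : ℂ)) *
        (G q a 0)^4 := by ring
  rw [hre, eC, eC, eC, eC]
  congr 2
  push_cast
  ring

noncomputable def ET (r : ℕ) (m : ℤ) : ℂ :=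
  ∑ t ∈ Finset.range (2^(r+1)), e (((m * (2*(t:ℤ))^2 : ℤ) : ℂ) / ((2^(r+2) : ℕ) : ℂ))

noncomputable def OT (r : ℕ) (m : ℤ) : ℂ :=
  ∑ t ∈ Finset.range (2^(r+1)), e (((m * (2*(t:ℤ)+1)^2 : ℤ) : ℂ) / ((2^(r+2) : ℕ) : ℂ))

lemma q_ne (k : ℕ) : (2^k : ℕ) ≠ 0 := by positivity

lemma G_split (r : ℕ) (m : ℤ) : G (2^(r+2)) m 0 = ET r m + OT r m := by
  unfold G ET OT
  rw [show (2:ℕ)^(r+2) = 2 * 2^(r+1) by ring]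
  rw [sum_even_odd (2^(r+1)) (fun x : ℕ => e (((m * (x:ℤ)^2 + 0 * (x:ℤ) : ℤ) : ℂ) / ((2 * 2^(r+1) : ℕ) : ℂ)))]
  congr 1
  · refine Finset.sum_congr rfl fun t _ => ?_
    congr 1
    push_cast
    ring
  · refine Finset.sum_congr rfl fun t _ => ?_
    congr 1
    push_cast
    ring

lemma G_split' (r : ℕ) (m : ℤ) :
    G (2^(r+2)) (m + 2^(r+1)) 0 = ET r m - OT r m := by
  unfold G ET OT
  rw [show (2:ℕ)^(r+2) = 2 * 2^(r+1) by ring]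
  rw [sum_even_odd (2^(r+1)) (fun x : ℕ => e ((((m + 2^(r+1)) * (x:ℤ)^2 + 0 * (x:ℤ) : ℤ) : ℂ) / ((2 * 2^(r+1) : ℕ) : ℂ)))]
  rw [sub_eq_add_neg, ← Finset.sum_neg_distrib]
  congr 1
  · refine Finset.sum_congr rfl fun t _ => ?_
    have h := eA (q := 2 * 2^(r+1)) (by positivity)
      (m * (2*(t:ℤ))^2) ((m + 2^(r+1)) * (2*(t:ℤ))^2 + 0 * (2*(t:ℤ)))
      (2*(t:ℤ)^2) (by push_cast; ring)
    rw [show ((2*(t:ℤ))) = ((2*t : ℕ) : ℤ) by push_cast; ring] at h ⊢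
    rw [h]
  · refine Finset.sum_congr rfl fun t _ => ?_
    have h := eB (q := 2 * 2^(r+1)) (by positivity)
      (m * (2*(t:ℤ)+1)^2) ((m + 2^(r+1)) * (2*(t:ℤ)+1)^2 + 0 * (2*(t:ℤ)+1))
      ((2*(t:ℤ)+1)^2) ⟨2*(t:ℤ)^2 + 2*t, by ring⟩ (by push_cast; ring)
    rw [show ((2*(t:ℤ)+1)) = ((2*t+1 : ℕ) : ℤ) by push_cast; ring] at h ⊢
    rw [h]

lemma OT_zero (r : ℕ) (a : ℤ) (ha : Odd a) : OT (r+2) a = 0 := by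
  unfold OT
  have hexp1 : (r+2)+1 = r+3 := by omega
  have hexp2 : (r+2)+2 = r+4 := by omega
  rw [hexp1, hexp2]
  refine sum_antiperiodic_eq_zero (2^(r+3))
    (fun t : ℤ => e (((a * (2*t+1)^2 : ℤ) : ℂ) / ((2^(r+4) : ℕ) : ℂ))) ?_ (2^(r+1)) ?_
  · intro t
    exact eA (q_ne (r+4)) (a * (2*t+1)^2) (a * (2*(t + (2^(r+3) : ℕ))+1)^2)
      (2*a*(2*t+1) + a * 2^(r+4)) (by push_cast; ring)
  · intro t
    refine eB (q_ne (r+4)) (a * (2*t+1)^2) (a * (2*(t + 2^(r+1))+1)^2)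
      (a * (2*t+1+2^(r+1))) (ha.mul ⟨t + 2^r, by ring⟩) (by push_cast; ring)

lemma E_s3 (a : ℤ) (ha : Odd a) : ET 1 a = 0 := by
  unfold ET
  rw [show (2:ℕ)^(1+1) = 4 by norm_num]
  rw [Finset.sum_range_succ, Finset.sum_range_succ, Finset.sum_range_succ,
    Finset.sum_range_succ, Finset.sum_range_zero]
  have h0 : e (((a * (2*((0:ℕ):ℤ))^2 : ℤ) : ℂ) / ((2^(1+2) : ℕ) : ℂ)) = 1 := by
    rw [show (a * (2*((0:ℕ):ℤ))^2 : ℤ) = 0 by push_cast; ring]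
    simpa using e_zero
  have h1 : e (((a * (2*((1:ℕ):ℤ))^2 : ℤ) : ℂ) / ((2^(1+2) : ℕ) : ℂ)) = -1 := by
    have := eB (q_ne (1+2)) 0 (a * (2*((1:ℕ):ℤ))^2) a ha (by push_cast; ring)
    rw [this]
    rw [show ((0:ℤ):ℂ) = 0 by norm_num, zero_div, e_zero]
  have h2 : e (((a * (2*((2:ℕ):ℤ))^2 : ℤ) : ℂ) / ((2^(1+2) : ℕ) : ℂ)) = 1 := by
    have := eA (q_ne (1+2)) 0 (a * (2*((2:ℕ):ℤ))^2) (2*a) (by push_cast; ring)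
    rw [this]
    rw [show ((0:ℤ):ℂ) = 0 by norm_num, zero_div, e_zero]
  have h3 : e (((a * (2*((3:ℕ):ℤ))^2 : ℤ) : ℂ) / ((2^(1+2) : ℕ) : ℂ)) = -1 := by
    have := eB (q_ne (1+2)) 0 (a * (2*((3:ℕ):ℤ))^2) (9*a) ((by decide : Odd (9:ℤ)).mul ha) (by push_cast; ring)
    rw [this]
    rw [show ((0:ℤ):ℂ) = 0 by norm_num, zero_div, e_zero]
  rw [h0, h1, h2, h3]
  ring

lemma g4_s2 (m : ℤ) (hm : Odd m) : (G 4 m 0)^4 = -64 := by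
  have hG : G 4 m 0 = 2 + 2 * e (((m : ℤ) : ℂ) / ((4 : ℕ) : ℂ)) := by
    unfold G
    rw [show (4:ℕ) = 3 + 1 from rfl]
    rw [Finset.sum_range_succ, Finset.sum_range_succ, Finset.sum_range_succ,
      Finset.sum_range_succ, Finset.sum_range_zero]
    rw [show (3+1 : ℕ) = 4 from rfl]
    have h0 : e (((m * ((0:ℕ):ℤ)^2 + 0 * ((0:ℕ):ℤ) : ℤ) : ℂ) / ((4 : ℕ) : ℂ)) = 1 := by
      rw [show (m * ((0:ℕ):ℤ)^2 + 0 * ((0:ℕ):ℤ) : ℤ) = 0 by push_cast; ring]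
      simpa using e_zero
    have h1 : e (((m * ((1:ℕ):ℤ)^2 + 0 * ((1:ℕ):ℤ) : ℤ) : ℂ) / ((4 : ℕ) : ℂ))
        = e (((m : ℤ) : ℂ) / ((4 : ℕ) : ℂ)) := by
      congr 1
      push_cast
      ring
    have h2 : e (((m * ((2:ℕ):ℤ)^2 + 0 * ((2:ℕ):ℤ) : ℤ) : ℂ) / ((4 : ℕ) : ℂ)) = 1 := by
      have := eA (show (4:ℕ) ≠ 0 by norm_num) 0 (m * ((2:ℕ):ℤ)^2 + 0 * ((2:ℕ):ℤ)) m
        (by push_cast; ring)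
      rw [this, show ((0:ℤ):ℂ) = 0 by norm_num, zero_div, e_zero]
    have h3 : e (((m * ((3:ℕ):ℤ)^2 + 0 * ((3:ℕ):ℤ) : ℤ) : ℂ) / ((4 : ℕ) : ℂ))
        = e (((m : ℤ) : ℂ) / ((4 : ℕ) : ℂ)) := by
      have := eA (show (4:ℕ) ≠ 0 by norm_num) m (m * ((3:ℕ):ℤ)^2 + 0 * ((3:ℕ):ℤ)) (2*m)
        (by push_cast; ring)
      rw [this]
    rw [h0, h1, h2, h3]
    ring
  set z := e (((m : ℤ) : ℂ) / ((4 : ℕ) : ℂ)) with hz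
  have hz2 : z^2 = -1 := by
    have hmul := eC 4 m m
    have := eB (show (4:ℕ) ≠ 0 by norm_num) 0 (m + m) m hm (by push_cast; ring)
    rw [this, show ((0:ℤ):ℂ) = 0 by norm_num, zero_div, e_zero] at hmul
    rw [hz, sq, hmul]
  rw [hG]
  linear_combination (16*z^2 + 64*z + 80) * hz2

lemma g4 (r : ℕ) (a : ℤ) (ha : Odd a) :
    (G (2^(r+2)) (a + 2^(r+1)) 0)^4 = (G (2^(r+2)) a 0)^4 := by
  match r with
  | 0 =>
    rw [show (2:ℕ)^(0+2) = 4 by norm_num, show ((2:ℤ)^(0+1)) = 2 by norm_num]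
    rw [g4_s2 a ha, g4_s2 (a+2) (by obtain ⟨k, rfl⟩ := ha; exact ⟨k+1, by ring⟩)]
  | 1 =>
    rw [G_split' 1 a, G_split 1 a, E_s3 a ha]
    ring
  | (r'+2) =>
    rw [G_split' (r'+2) a, G_split (r'+2) a, OT_zero r' a ha]
    ring

lemma G2_zero : G 2 1 0 = 0 := by
  unfold G
  rw [show (2:ℕ) = 1 + 1 from rfl]
  rw [Finset.sum_range_succ, Finset.sum_range_succ, Finset.sum_range_zero]
  rw [show (1+1 : ℕ) = 2 from rfl]
  have h0 : e ((((1:ℤ) * ((0:ℕ):ℤ)^2 + 0 * ((0:ℕ):ℤ) : ℤ) : ℂ) / ((2 : ℕ) : ℂ)) = 1 := by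
    rw [show ((1:ℤ) * ((0:ℕ):ℤ)^2 + 0 * ((0:ℕ):ℤ) : ℤ) = 0 by norm_num]
    simpa using e_zero
  have h1 : e ((((1:ℤ) * ((1:ℕ):ℤ)^2 + 0 * ((1:ℕ):ℤ) : ℤ) : ℂ) / ((2 : ℕ) : ℂ)) = -1 := by
    have := eB (show (2:ℕ) ≠ 0 by norm_num) 0 ((1:ℤ) * ((1:ℕ):ℤ)^2 + 0 * ((1:ℕ):ℤ)) 1
      odd_one (by norm_num)
    rw [this, show ((0:ℤ):ℂ) = 0 by norm_num, zero_div, e_zero]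
  rw [h0, h1]
  ring


/-- for odd N and all s ≥ 1, the local factor at 2 (with d = 1) vanishes:
∑_{a mod 2ˢ, a odd} e(a(∑bⱼ²−N)/2ˢ)·∏ⱼ G(2ˢ, a, 2abⱼ) = 0. -/
theorem local_factor_two_vanishes (N : ℤ) (hN : Odd N) (b : Fin 4 → ℤ)
    (s : ℕ) (hs : 1 ≤ s) :
    ∑ a ∈ (Finset.range (2 ^ s)).filter (fun a => Nat.Coprime a (2 ^ s)),
      e ((((a : ℤ) * ((b 0 ^ 2 + b 1 ^ 2 + b 2 ^ 2 + b 3 ^ 2) - N) : ℤ) : ℂ) / ((2 ^ s : ℕ) : ℂ)) *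
        ∏ j : Fin 4, G (2 ^ s) (a : ℤ) (2 * (a : ℤ) * b j) = 0 := by
  have hq : (2^s : ℕ) ≠ 0 := q_ne s
  rw [Finset.sum_congr rfl fun (a : ℕ) _ => key (2^s) hq (a : ℤ) N b]
  have hfil : (Finset.range (2^s)).filter (fun a => Nat.Coprime a (2^s))
      = (Finset.range (2^s)).filter (fun a => Odd a) := by
    refine Finset.filter_congr fun x _ => ?_
    rw [Nat.coprime_pow_right_iff (by omega : 0 < s), Nat.coprime_two_right]
  rw [hfil]
  obtain ⟨s', rfl⟩ : ∃ s', s = s' + 1 := ⟨s - 1, by omega⟩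
  cases s' with
  | zero =>
    have h2 : (Finset.range (2^(0+1))).filter (fun a => Odd a) = {1} := by decide
    rw [h2, Finset.sum_singleton]
    rw [show ((2:ℕ)^(0+1)) = 2 by norm_num]
    rw [show (((1:ℕ):ℤ)) = (1:ℤ) by norm_num]
    rw [G2_zero]
    ring
  | succ r =>
    have h12 : r + 1 + 1 = r + 2 := by omega
    rw [h12]
    rw [sum_odd (2^(r+2)) (2^(r+1)) (by ring)
      (fun a : ℕ => e (((-((a:ℤ) * N) : ℤ) : ℂ) / ((2^(r+2) : ℕ) : ℂ)) * (G (2^(r+2)) (a:ℤ) 0)^4)]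
    have hcast : ∀ t : ℕ, ((2*t+1 : ℕ) : ℤ) = 2*(t:ℤ)+1 := by intro t; push_cast; ring
    rw [Finset.sum_congr rfl fun t _ => by rw [hcast t]]
    refine sum_antiperiodic_eq_zero (2^(r+1))
      (fun t : ℤ => e (((-((2*t+1) * N) : ℤ) : ℂ) / ((2^(r+2) : ℕ) : ℂ)) *
        (G (2^(r+2)) (2*t+1) 0)^4) ?_ (2^r) ?_
    · intro t
      have he : e (((-((2*(t + ((2^(r+1):ℕ):ℤ))+1) * N) : ℤ) : ℂ) / ((2^(r+2) : ℕ) : ℂ))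
          = e (((-((2*t+1) * N) : ℤ) : ℂ) / ((2^(r+2) : ℕ) : ℂ)) :=
        eA (q_ne (r+2)) _ _ (-N) (by push_cast; ring)
      have harg : 2*(t + ((2^(r+1):ℕ):ℤ))+1 = (2*t+1) + ((2^(r+2):ℕ):ℤ) := by push_cast; ring
      show e (((-((2*(t + ((2^(r+1):ℕ):ℤ))+1) * N) : ℤ) : ℂ) / ((2^(r+2) : ℕ) : ℂ)) *
          (G (2^(r+2)) (2*(t + ((2^(r+1):ℕ):ℤ))+1) 0)^4
        = e (((-((2*t+1) * N) : ℤ) : ℂ) / ((2^(r+2) : ℕ) : ℂ)) * (G (2^(r+2)) (2*t+1) 0)^4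
      rw [he, harg, G_period (2^(r+2)) (q_ne (r+2))]
    · intro t
      have he : e (((-((2*(t + 2^r)+1) * N) : ℤ) : ℂ) / ((2^(r+2) : ℕ) : ℂ))
          = - e (((-((2*t+1) * N) : ℤ) : ℂ) / ((2^(r+2) : ℕ) : ℂ)) :=
        eB (q_ne (r+2)) _ _ (-N) hN.neg (by push_cast; ring)
      have harg : 2*(t + 2^r)+1 = (2*t+1) + 2^(r+1) := by ring
      have hg := g4 r (2*t+1) ⟨t, by ring⟩
      show e (((-((2*(t + 2^r)+1) * N) : ℤ) : ℂ) / ((2^(r+2) : ℕ) : ℂ)) *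
          (G (2^(r+2)) (2*(t + 2^r)+1) 0)^4
        = -(e (((-((2*t+1) * N) : ℤ) : ℂ) / ((2^(r+2) : ℕ) : ℂ)) * (G (2^(r+2)) (2*t+1) 0)^4)
      rw [he, harg, hg]
      ring
end

section
/- Let p > 2 be prime and N an integer. Then the complete exponential sum L₄ = ∑_{a₁,a₂,a₃ mod p, all coprime to p, with a₁a₂a₃(a₁+a₂+a₃−N)+1 ≡ 0 (mod p)} (a₁a₂a₃/p) satisfies |L₄| ≤ 3·p^{3/2}, where (·/p) is the Legendre symbol. -/
/-!
Write `χ` for the quadratic character and `L` for the sum. Orthogonality of the `p - 1`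
multiplicative characters `η` detects the condition `-a₁a₂a₃(a₁ + a₂ + a₃ - N) = 1`, giving
`(p - 1) L = ∑_η η(-1) T(η)` with `T(η) = ∑_a ∏ᵢ (χη)(aᵢ) · η(a₁ + a₂ + a₃ - N)`.
For `η ≠ 1`, expanding `η` in additive characters through its Gauss sum separates the variables:
`G(η⁻¹) T(η) = G(χη)³ G((χη⁴)⁻¹, ψ_{-N})`, so `|T(η)| ≤ p^{3/2}` unless `η⁴ = χ`, and
`|T(η)| ≤ p²` always. For `η = 1` the complete sum of `χ(a₁)χ(a₂)χ(a₃)` vanishes and `p²` terms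
remain. There are at most four `η` with `η⁴ = χ`, and they exist only when `8 ∣ p - 1`; this is
small enough to absorb their contribution into `3 p^{3/2}`.
-/

open Finset

lemma AddChar.map_sum_eq_prod {A M ι : Type*} [AddCommMonoid A] [CommMonoid M] (e : AddChar A M)
    (s : Finset ι) (a : ι → A) : e (∑ i ∈ s, a i) = ∏ i ∈ s, e (a i) := by
  induction s using Finset.cons_induction with
  | empty => simp
  | cons _ _ _ ih => rw [sum_cons, prod_cons, map_add_eq_mul, ih]

lemma MulChar.norm_apply_le_one {M R : Type*} [CommMonoid M] [Finite M] [NormedField R]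
    (χ : MulChar M R) (a : M) : ‖χ a‖ ≤ 1 := by
  by_cases ha : IsUnit a
  · rw [← ha.unit_spec, ← χ.coe_toUnitHom]
    exact (Units.isOfFinOrder_val.mpr
      (χ.toUnitHom.isOfFinOrder (isOfFinOrder_of_finite ha.unit))).norm_eq_one.le
  · simp [χ.map_nonunit ha]

section FiniteField

variable {F : Type*} [Field F] [Fintype F]

lemma card_filter_sum_eq [DecidableEq F] (n : ℕ) (c : F) :
    #{a : Fin (n + 1) → F | ∑ i, a i = c} = Fintype.card F ^ n := by
  calc #{a : Fin (n + 1) → F | ∑ i, a i = c} = #(univ : Finset (Fin n → F)) := by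
        refine card_nbij' Fin.tail (fun b => Fin.cons (c - ∑ i, b i) b) (by simp) (by simp)
          (fun a ha => ?_) (fun b _ => Fin.tail_cons _ _)
        simp only [coe_filter, mem_univ, true_and, Set.mem_ofPred_eq] at ha
        rw [← Fin.cons_self_tail a]
        simp [← ha, Fin.sum_univ_succ, Fin.tail]
    _ = Fintype.card F ^ n := by simp

section GaussSum

variable {R : Type*} [CommRing R]

lemma sum_mul_mulShift_eq_inv_mul_gaussSum (μ : MulChar F R) (e : AddChar F R) {t : F}
    (ht : t ≠ 0) : ∑ x, μ x * e (t * x) = μ⁻¹ t * gaussSum μ e := by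
  have hu : IsUnit t := isUnit_iff_ne_zero.mpr ht
  rw [← gaussSum_mulShift μ e hu.unit, ← mul_assoc, hu.unit_spec, ← MulChar.mul_apply,
    inv_mul_cancel, MulChar.one_apply hu, one_mul]
  rfl

lemma apply_mul_gaussSum_inv [IsDomain R] {η : MulChar F R} (hη : η ≠ 1) (e : AddChar F R)
    (y : F) : η y * gaussSum η⁻¹ e = ∑ t, η⁻¹ t * e (t * y) := by
  rcases eq_or_ne y 0 with rfl | hy
  · simp [η.map_zero, MulChar.sum_eq_zero_of_ne_one (inv_ne_one.mpr hη)]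
  · simp_rw [mul_comm _ y, sum_mul_mulShift_eq_inv_mul_gaussSum _ _ hy, inv_inv]

/-- `T(η)` of the header is `mixedCharSum 3 (χ * η) η N`. -/
def mixedCharSum (n : ℕ) (μ η : MulChar F R) (c : F) : R :=
  ∑ a : Fin n → F, (∏ i, μ (a i)) * η (∑ i, a i - c)

theorem gaussSum_inv_mul_mixedCharSum [IsDomain R] {η : MulChar F R} (hη : η ≠ 1) (n : ℕ)
    (μ : MulChar F R) (e : AddChar F R) (c : F) :
    gaussSum η⁻¹ e * mixedCharSum n μ η c =
      gaussSum μ e ^ n * gaussSum (η * μ ^ n)⁻¹ (e.mulShift (-c)) := by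
  have hsplit (a : Fin n → F) (t : F) :
      e (t * (∑ i, a i - c)) = e (t * -c) * ∏ i, e (t * a i) := by
    rw [mul_sub, sub_eq_add_neg, ← mul_neg, AddChar.map_add_eq_mul, mul_sum,
      AddChar.map_sum_eq_prod, mul_comm]
  calc gaussSum η⁻¹ e * mixedCharSum n μ η c
      = ∑ a : Fin n → F, ∑ t, η⁻¹ t * e (t * -c) * ∏ i, μ (a i) * e (t * a i) := by
        rw [mixedCharSum, mul_sum]
        refine sum_congr rfl fun a _ => ?_
        rw [mul_comm (gaussSum _ _), mul_assoc, apply_mul_gaussSum_inv hη, mul_sum]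
        refine sum_congr rfl fun t _ => ?_
        rw [hsplit, prod_mul_distrib]
        ring
    _ = ∑ t, η⁻¹ t * e (t * -c) * (∑ x, μ x * e (t * x)) ^ n := by
        rw [sum_comm]
        simp_rw [← mul_sum, sum_pow', Fintype.piFinset_univ]
    _ = gaussSum μ e ^ n * gaussSum (η * μ ^ n)⁻¹ (e.mulShift (-c)) := by
        rw [gaussSum.eq_1 (η * μ ^ n)⁻¹, mul_sum]
        refine sum_congr rfl fun t _ => ?_
        rcases eq_or_ne t 0 with rfl | ht
        · simp [MulChar.map_zero]
        · have hu : IsUnit t := isUnit_iff_ne_zero.mpr ht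
          rw [sum_mul_mulShift_eq_inv_mul_gaussSum _ _ ht, mul_inv, ← inv_pow, ← hu.unit_spec,
            MulChar.mul_apply, MulChar.pow_apply_coe, AddChar.mulShift_apply, mul_comm (-c)]
          ring

end GaussSum

lemma norm_gaussSum_eq_sqrt_card {χ : MulChar F ℂ} (hχ : χ ≠ 1) {e : AddChar F ℂ}
    (he : e.IsPrimitive) : ‖gaussSum χ e‖ = √(Fintype.card F) := by
  have h : gaussSum χ e * (starRingEnd ℂ) (gaussSum χ e) = Fintype.card F := by
    rw [← gaussSum_mul_gaussSum_eq_card hχ he, ← star_gaussSum_eq]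
    rfl
  rw [Complex.mul_conj'] at h
  rw [← Real.sqrt_sq (norm_nonneg _)]
  exact congrArg Real.sqrt (by exact_mod_cast h)

lemma norm_gaussSum_le_card (χ : MulChar F ℂ) (e : AddChar F ℂ) :
    ‖gaussSum χ e‖ ≤ Fintype.card F := by
  calc ‖∑ x, χ x * e x‖ ≤ ∑ _x : F, (1 : ℝ) :=
        norm_sum_le_of_le _ fun x _ => by simpa using χ.norm_apply_le_one x
    _ = Fintype.card F := by simp

lemma norm_gaussSum_le_sqrt_card {χ : MulChar F ℂ} {e : AddChar F ℂ} (h : χ ≠ 1 ∨ e ≠ 1) :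
    ‖gaussSum χ e‖ ≤ √(Fintype.card F) := by
  by_cases hχ : χ = 1
  · have he := h.resolve_left (not_not.mpr hχ)
    rw [hχ, gaussSum_one_left he, norm_neg, norm_one, Real.one_le_sqrt]
    exact_mod_cast Fintype.card_pos
  by_cases he : e = 1
  · simp [he, gaussSum_one_right hχ]
  exact (norm_gaussSum_eq_sqrt_card hχ (AddChar.IsPrimitive.of_ne_one he)).le

lemma norm_mixedCharSum_le {η : MulChar F ℂ} (hη : η ≠ 1) (n : ℕ) (μ : MulChar F ℂ)
    {e : AddChar F ℂ} (he : e.IsPrimitive) (c : F) :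
    ‖mixedCharSum (n + 1) μ η c‖ ≤
      √(Fintype.card F) ^ n * if η * μ ^ (n + 1) = 1 then (Fintype.card F : ℝ)
        else √(Fintype.card F) := by
  have he1 : e ≠ 1 := by simpa using he one_ne_zero
  have hq : 0 < √(Fintype.card F) := Real.sqrt_pos.mpr (by exact_mod_cast Fintype.card_pos)
  have hG := congrArg norm (gaussSum_inv_mul_mixedCharSum hη (n + 1) μ e c)
  rw [norm_mul, norm_mul, norm_pow, norm_gaussSum_eq_sqrt_card (inv_ne_one.mpr hη) he] at hG
  refine le_of_mul_le_mul_left ?_ hq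
  rw [hG, ← mul_assoc, ← pow_succ']
  gcongr
  · exact norm_gaussSum_le_sqrt_card (Or.inr he1)
  · split_ifs with hν
    · exact norm_gaussSum_le_card _ _
    · exact norm_gaussSum_le_sqrt_card (Or.inl (inv_ne_one.mpr hν))

lemma norm_mixedCharSum_one_le {μ : MulChar F ℂ} (hμ : μ ≠ 1) (n : ℕ) (c : F) :
    ‖mixedCharSum (n + 1) μ 1 c‖ ≤ Fintype.card F ^ n := by
  classical
  have h_one (y : F) : (1 : MulChar F ℂ) y = 1 - if y = 0 then 1 else 0 := by
    rcases eq_or_ne y 0 with rfl | hy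
    · simp [MulChar.map_zero]
    · simp [MulChar.one_apply (isUnit_iff_ne_zero.mpr hy), hy]
  have h_split : mixedCharSum (n + 1) μ 1 c =
      (∑ x, μ x) ^ (n + 1) - ∑ a : Fin (n + 1) → F with ∑ i, a i = c, ∏ i, μ (a i) := by
    simp_rw [mixedCharSum, h_one, mul_sub, mul_one, sum_sub_distrib, sum_pow',
      Fintype.piFinset_univ, mul_ite, mul_one, mul_zero, sub_eq_zero, sum_filter]
  rw [h_split, MulChar.sum_eq_zero_of_ne_one hμ, zero_pow n.succ_ne_zero, zero_sub, norm_neg]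
  calc ‖∑ a : Fin (n + 1) → F with ∑ i, a i = c, ∏ i, μ (a i)‖
      ≤ ∑ a : Fin (n + 1) → F with ∑ i, a i = c, (1 : ℝ) :=
        norm_sum_le_of_le _ fun a _ => by
          rw [norm_prod]
          exact prod_le_one (fun _ _ => norm_nonneg _) fun i _ => μ.norm_apply_le_one _
    _ = Fintype.card F ^ n := by
        rw [sum_const, nsmul_one]
        exact_mod_cast card_filter_sum_eq n c

end FiniteField

lemma card_filter_pow_eq_le_card_filter_pow_eq_one {G : Type*} [CommGroup G] [Fintype G]
    [DecidableEq G] (n : ℕ) (a : G) : #{g | g ^ n = a} ≤ #{g : G | g ^ n = 1} := by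
  obtain ⟨g₀, hg₀⟩ | hempty := (filter (fun g : G => g ^ n = a) univ).eq_empty_or_nonempty.symm
  · refine card_le_card_of_injOn (· * g₀⁻¹) (fun g hg => ?_) (mul_left_injective _).injOn
    simp only [coe_filter, mem_univ, true_and, Set.mem_ofPred_eq] at hg ⊢
    rw [mul_pow, inv_pow, hg, (mem_filter.mp hg₀).2, mul_inv_cancel]
  · simp [hempty]

lemma mul_mul_pow_three_eq_one_iff {G : Type*} [CommGroup G] {χ : G} (hχ₂ : χ ^ 2 = 1) (η : G) :
    η * (χ * η) ^ 3 = 1 ↔ η ^ 4 = χ := by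
  have h : η * (χ * η) ^ 3 = χ * η ^ 4 := by
    rw [mul_pow, pow_succ χ 2, hχ₂, one_mul, mul_left_comm, ← pow_succ']
  rw [h, mul_eq_one_iff_eq_inv', inv_eq_of_mul_eq_one_right (by rwa [← sq])]

section ZMod

variable {p : ℕ} [Fact p.Prime]

lemma card_mulChar_zmod : Fintype.card (MulChar (ZMod p) ℂ) = p - 1 := by
  rw [← Nat.card_eq_fintype_card, DirichletCharacter.card_eq_totient_of_hasEnoughRootsOfUnity,
    Nat.totient_prime Fact.out]

instance : IsCyclic (MulChar (ZMod p) ℂ) :=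
  (MulChar.mulEquiv_units (ZMod p) ℂ).some.isCyclic.mpr inferInstance

lemma card_filter_pow_eq_le (n : ℕ) (hn : 0 < n) (χ : MulChar (ZMod p) ℂ) :
    #{η : MulChar (ZMod p) ℂ | η ^ n = χ} ≤ n :=
  (card_filter_pow_eq_le_card_filter_pow_eq_one n χ).trans (IsCyclic.card_pow_eq_one_le hn)

lemma eight_dvd_sub_one {χ η : MulChar (ZMod p) ℂ} (hχ : χ ≠ 1) (hχ₂ : χ ^ 2 = 1)
    (hη : η ^ 4 = χ) : 8 ∣ p - 1 := by
  have : Fact (Nat.Prime 2) := ⟨Nat.prime_two⟩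
  have hord : orderOf η = 2 ^ 3 :=
    orderOf_eq_prime_pow (n := 2) (by rwa [show 2 ^ 2 = 4 from rfl, hη])
      (by rw [show 2 ^ 3 = 4 * 2 from rfl, pow_mul, hη, hχ₂])
  rw [← card_mulChar_zmod, show 8 = 2 ^ 3 from rfl, ← hord]
  exact orderOf_dvd_card

noncomputable def solutionCharSum (n : ℕ) (χ : MulChar (ZMod p) ℂ) (c : ZMod p) : ℂ :=
  ∑ a : Fin n → ZMod p, if (∏ i, a i) * (∑ i, a i - c) + 1 = 0 then χ (∏ i, a i) else 0

theorem natCast_mul_solutionCharSum (n : ℕ) (χ : MulChar (ZMod p) ℂ) (c : ZMod p) :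
    ((p - 1 : ℕ) : ℂ) * solutionCharSum n χ c =
      ∑ η : MulChar (ZMod p) ℂ, η (-1) * mixedCharSum n (χ * η) η c := by
  have h_detect (a : Fin n → ZMod p) :
      ((p - 1 : ℕ) : ℂ) * (if (∏ i, a i) * (∑ i, a i - c) + 1 = 0 then χ (∏ i, a i) else 0) =
        ∑ η : MulChar (ZMod p) ℂ, η (-1) * ((∏ i, (χ * η) (a i)) * η (∑ i, a i - c)) := by
    have h_orth := DirichletCharacter.sum_characters_eq ℂ (-((∏ i, a i) * (∑ i, a i - c)))
    simp only [Nat.totient_prime Fact.out, neg_eq_iff_add_eq_zero] at h_orth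
    rw [mul_ite, mul_zero, ← ite_zero_mul, ← h_orth, sum_mul]
    refine sum_congr rfl fun η _ => ?_
    rw [show -((∏ i, a i) * (∑ i, a i - c)) = -1 * (∏ i, a i) * (∑ i, a i - c) by ring,
      map_mul, map_mul, map_prod, map_prod χ]
    simp only [MulChar.mul_apply, prod_mul_distrib]
    ring
  simp_rw [solutionCharSum, mul_sum, h_detect, mixedCharSum, mul_sum]
  exact sum_comm

noncomputable def exceptionalChars (χ : MulChar (ZMod p) ℂ) : Finset (MulChar (ZMod p) ℂ) :=
  {η | η = 1 ∨ η ^ 4 = χ}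

lemma norm_mixedCharSum_three_le {χ : MulChar (ZMod p) ℂ} (hχ : χ ≠ 1) (hχ₂ : χ ^ 2 = 1)
    (η : MulChar (ZMod p) ℂ) (c : ZMod p) :
    ‖mixedCharSum 3 (χ * η) η c‖ ≤ p * if η ∈ exceptionalChars χ then (p : ℝ) else √p := by
  simp only [exceptionalChars, mem_filter, mem_univ, true_and]
  by_cases hη : η = 1
  · subst hη
    simpa [ZMod.card, sq] using norm_mixedCharSum_one_le hχ 2 c
  · have h := norm_mixedCharSum_le hη 2 (χ * η) (ZMod.isPrimitive_stdAddChar p) c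
    rw [ZMod.card, Real.sq_sqrt (Nat.cast_nonneg p)] at h
    simpa only [Nat.reduceAdd, mul_mul_pow_three_eq_one_iff hχ₂, hη, false_or] using h

lemma card_exceptionalChars_mul_sqrt_le {χ : MulChar (ZMod p) ℂ} (hχ : χ ≠ 1)
    (hχ₂ : χ ^ 2 = 1) : (#(exceptionalChars χ) : ℝ) * √p ≤ 2 * (p - 1) := by
  have hp : (2 : ℝ) ≤ p := by exact_mod_cast (Fact.out : p.Prime).two_le
  have hs : √p ^ 2 = p := Real.sq_sqrt (by positivity)
  have hcard : #(exceptionalChars χ) ≤ 1 + #{η | η ^ 4 = χ} := by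
    rw [exceptionalChars, filter_or, filter_eq' univ 1, if_pos (mem_univ _)]
    exact card_union_le _ _
  obtain hempty | ⟨η, hη⟩ :=
    (filter (fun η : MulChar (ZMod p) ℂ => η ^ 4 = χ) univ).eq_empty_or_nonempty
  · rw [hempty, card_empty] at hcard
    have : (#(exceptionalChars χ) : ℝ) ≤ 1 := by exact_mod_cast hcard
    nlinarith [Real.sqrt_nonneg p]
  · have h8 := eight_dvd_sub_one hχ hχ₂ (mem_filter.mp hη).2
    have hp9 : (9 : ℝ) ≤ p := by
      have := Nat.le_of_dvd (Nat.sub_pos_of_lt (Fact.out : p.Prime).one_lt) h8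
      exact_mod_cast (by omega : 9 ≤ p)
    have : (#(exceptionalChars χ) : ℝ) ≤ 5 := by
      exact_mod_cast hcard.trans (by linarith [card_filter_pow_eq_le 4 (by norm_num) χ])
    have : 3 ≤ √p := Real.le_sqrt_of_sq_le (by linarith)
    nlinarith [Real.sqrt_nonneg p]

lemma sum_ite_mem_exceptionalChars_le (χ : MulChar (ZMod p) ℂ) :
    ∑ η : MulChar (ZMod p) ℂ, (if η ∈ exceptionalChars χ then (p : ℝ) else √p) ≤
      (p - 1) * √p + #(exceptionalChars χ) * p := by
  have hcompl : (#{η | η ∉ exceptionalChars χ} : ℝ) ≤ p - 1 := by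
    have h := card_filter_le (univ : Finset (MulChar (ZMod p) ℂ)) (· ∉ exceptionalChars χ)
    rw [card_univ, card_mulChar_zmod] at h
    calc (#{η | η ∉ exceptionalChars χ} : ℝ) ≤ ((p - 1 : ℕ) : ℝ) := by exact_mod_cast h
      _ = p - 1 := by rw [Nat.cast_sub (Fact.out : p.Prime).one_le, Nat.cast_one]
  rw [sum_ite, sum_const, sum_const, nsmul_eq_mul, nsmul_eq_mul, filter_univ_mem]
  nlinarith [Real.sqrt_nonneg p]

theorem norm_solutionCharSum_three_le {χ : MulChar (ZMod p) ℂ} (hχ : χ ≠ 1) (hχ₂ : χ ^ 2 = 1)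
    (c : ZMod p) : ‖solutionCharSum 3 χ c‖ ≤ 3 * (p * √p) := by
  have hp : (1 : ℝ) < p := by exact_mod_cast (Fact.out : p.Prime).one_lt
  have hp_sub_one : ‖((p - 1 : ℕ) : ℂ)‖ = p - 1 := by
    rw [Complex.norm_natCast, Nat.cast_sub (Fact.out : p.Prime).one_le, Nat.cast_one]
  refine le_of_mul_le_mul_left ?_ (sub_pos.mpr hp)
  calc ((p : ℝ) - 1) * ‖solutionCharSum 3 χ c‖
      = ‖∑ η : MulChar (ZMod p) ℂ, η (-1) * mixedCharSum 3 (χ * η) η c‖ := by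
        rw [← natCast_mul_solutionCharSum, norm_mul, hp_sub_one]
    _ ≤ ∑ η : MulChar (ZMod p) ℂ, p * if η ∈ exceptionalChars χ then (p : ℝ) else √p := by
        refine norm_sum_le_of_le _ fun η _ => ?_
        rw [norm_mul]
        exact (mul_le_of_le_one_left (norm_nonneg _) (η.norm_apply_le_one _)).trans
          (norm_mixedCharSum_three_le hχ hχ₂ η c)
    _ ≤ p * ((p - 1) * √p + #(exceptionalChars χ) * p) := by
        rw [← mul_sum]
        exact mul_le_mul_of_nonneg_left (sum_ite_mem_exceptionalChars_le χ) (by positivity)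
    _ ≤ ((p : ℝ) - 1) * (3 * (p * √p)) := by
        have hE := mul_le_mul_of_nonneg_right (card_exceptionalChars_mul_sqrt_le hχ hχ₂)
          (by positivity : (0 : ℝ) ≤ p * √p)
        rw [mul_mul_mul_comm, Real.mul_self_sqrt (by positivity)] at hE
        nlinarith

end ZMod

lemma intCast_sum_legendreSym_eq_solutionCharSum (p : ℕ) [Fact p.Prime] (c : ZMod p) :
    ((∑ a ∈ univ.filter (fun a : Fin 3 → ZMod p =>
        (∀ i, a i ≠ 0) ∧ a 0 * a 1 * a 2 * (a 0 + a 1 + a 2 - c) + 1 = 0),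
        legendreSym p (((a 0 * a 1 * a 2).val : ℤ)) : ℤ) : ℂ) =
      solutionCharSum 3 ((quadraticChar (ZMod p)).ringHomComp (Int.castRingHom ℂ)) c := by
  rw [sum_filter, Int.cast_sum, solutionCharSum]
  refine sum_congr rfl fun a _ => ?_
  simp only [Fin.prod_univ_three, Fin.sum_univ_three]
  by_cases h : a 0 * a 1 * a 2 * (a 0 + a 1 + a 2 - c) + 1 = 0
  · have h_units : ∀ i, a i ≠ 0 := by
      have : ∏ i, a i ≠ 0 := by
        rw [Fin.prod_univ_three]
        rintro h0
        simp [h0] at h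
      exact fun i => prod_ne_zero_iff.mp this i (mem_univ i)
    simp [h, h_units, legendreSym, MulChar.ringHomComp_apply]
  · simp [h]

/-- the twisted count
L₄ = ∑_{a₁,a₂,a₃ units mod p, a₁a₂a₃(a₁+a₂+a₃−N)+1 ≡ 0} (a₁a₂a₃/p)
satisfies |L₄| ≤ 3·p^{3/2}. -/
theorem L4_bound (p : ℕ) [Fact p.Prime] (hp2 : 2 < p) (N : ℤ) :
    |((∑ a ∈ Finset.univ.filter (fun a : Fin 3 → ZMod p =>
        (∀ i, a i ≠ 0) ∧ a 0 * a 1 * a 2 * (a 0 + a 1 + a 2 - (N : ZMod p)) + 1 = 0),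
        legendreSym p (((a 0 * a 1 * a 2).val : ℤ)) : ℤ) : ℝ)|
      ≤ 3 * (p : ℝ) ^ ((3 : ℝ) / 2) := by
  have hχ : (quadraticChar (ZMod p)).ringHomComp (Int.castRingHom ℂ) ≠ 1 :=
    (MulChar.ringHomComp_ne_one_iff Int.cast_injective).mpr
      (quadraticChar_ne_one (by rw [ZMod.ringChar_zmod_n]; omega))
  have hχ₂ : ((quadraticChar (ZMod p)).ringHomComp (Int.castRingHom ℂ)) ^ 2 = 1 :=
    ((quadraticChar_isQuadratic (ZMod p)).comp _).sq_eq_one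
  have hpow : (p : ℝ) ^ ((3 : ℝ) / 2) = p * √p := by
    rw [show (3 : ℝ) / 2 = 1 + 1 / 2 by norm_num, Real.rpow_add (by positivity), Real.rpow_one,
      Real.sqrt_eq_rpow]
  rw [← Complex.norm_intCast, intCast_sum_legendreSym_eq_solutionCharSum, hpow]
  exact norm_solutionCharSum_three_le hχ hχ₂ _
end
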